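/- arXiv:1401.6748 — 2 statements merged into one kernel-verified Lean document; each statement's English description precedes it below -/
import Mathlib

section
/- Let H be a complex Hilbert space, let u be a unitary bounded linear operator on H, and let n ≥ 1 be a natural number. Then there exists a unitary bounded linear operator v on H such that vⁿ = u. -/
/-!
The principal branch `z ↦ z ^ (1 / n)` is continuous off the negative real axis, and a unitary
with nonnegative real part has its spectrum on the unit circle minus `-1`; so for such unitaries
the continuous functional calculus already gives a unitary `n`-th root. A general unitary `u`
is cut into two such pieces by the spectral projection `p` of `ℜ u` for `[0, ∞)`, i.e. the
projection onto `ker (ℜ u)⁻`, which commutes with `u`: both `u p + (1 - p)` and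
`-u (1 - p) + p` have nonnegative real part. Their roots, the second one rotated by an `n`-th
root of `-1`, glue along `p` to a unitary `n`-th root of `u`.
-/

open Complex
open scoped ComplexStarModule

section Glue

variable {R : Type*} [Ring R] {p x y x' y' : R}

lemma mul_add_mul_one_sub_mul (hp : IsIdempotentElem p) (hx' : Commute p x')
    (hy' : Commute p y') :
    (x * p + y * (1 - p)) * (x' * p + y' * (1 - p)) = x * x' * p + y * y' * (1 - p) := by
  have hpq : p * (1 - p) = 0 := by rw [mul_sub, mul_one, hp.eq, sub_self]
  have hqp : (1 - p) * p = 0 := by rw [sub_mul, one_mul, hp.eq, sub_self]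
  have hy'q : Commute (1 - p) y' := (Commute.one_left y').sub_left hy'
  calc _ = x * (p * x') * p + x * (p * y') * (1 - p) + y * ((1 - p) * x') * p
          + y * ((1 - p) * y') * (1 - p) := by noncomm_ring
    _ = x * x' * (p * p) + x * y' * (p * (1 - p)) + y * (x' * ((1 - p) * p))
          + y * y' * ((1 - p) * (1 - p)) := by
        rw [hx'.eq, hy'.eq, hy'q.eq, ((Commute.one_left x').sub_left hx').eq]; noncomm_ring
    _ = _ := by rw [hp.eq, hp.one_sub.eq, hpq, hqp]; noncomm_ring

lemma mul_add_mul_one_sub_pow (hp : IsIdempotentElem p) (hx : Commute p x) (hy : Commute p y)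
    (n : ℕ) : (x * p + y * (1 - p)) ^ n = x ^ n * p + y ^ n * (1 - p) := by
  induction n with
  | zero => simp
  | succ n ih => rw [pow_succ, ih, mul_add_mul_one_sub_mul hp hx hy, pow_succ, pow_succ]

lemma commute_mul_add_mul_one_sub (hx : Commute p x) (hy : Commute p y) :
    Commute p (x * p + y * (1 - p)) :=
  (hx.mul_right (.refl p)).add_right (hy.mul_right ((Commute.one_right p).sub_right (.refl p)))

variable [StarRing R]

lemma star_mul_add_mul_one_sub (hp : IsSelfAdjoint p) (hx : Commute p x) (hy : Commute p y) :
    star (x * p + y * (1 - p)) = star x * p + star y * (1 - p) := by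
  have hx' : Commute p (star x) := hp.star_eq ▸ hx.star_star
  have hy' : Commute (1 - p) (star y) := (Commute.one_left _).sub_left (hp.star_eq ▸ hy.star_star)
  rw [star_add, star_mul, star_mul, hp.star_eq, star_sub, star_one, hp.star_eq, hx'.eq, hy'.eq]

lemma mul_add_mul_one_sub_mem_unitary (hp : IsStarProjection p) (hx : Commute p x)
    (hy : Commute p y) (hxu : x ∈ unitary R) (hyu : y ∈ unitary R) :
    x * p + y * (1 - p) ∈ unitary R := by
  have hx' : Commute p (star x) := hp.isSelfAdjoint.star_eq ▸ hx.star_star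
  have hy' : Commute p (star y) := hp.isSelfAdjoint.star_eq ▸ hy.star_star
  rw [Unitary.mem_iff, star_mul_add_mul_one_sub hp.isSelfAdjoint hx hy,
    mul_add_mul_one_sub_mul hp.isIdempotentElem hx hy,
    mul_add_mul_one_sub_mul hp.isIdempotentElem hx' hy', Unitary.star_mul_self_of_mem hxu,
    Unitary.star_mul_self_of_mem hyu, Unitary.mul_star_self_of_mem hxu,
    Unitary.mul_star_self_of_mem hyu]
  simp

end Glue

section Roots

variable {A : Type*} [CStarAlgebra A] [PartialOrder A] [StarOrderedRing A] {w : A}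

lemma spectrum_subset_slitPlane_of_nonneg_realPart (hw : w ∈ unitary A)
    (hre : 0 ≤ (ℜ w : A)) : spectrum ℂ w ⊆ slitPlane := by
  have := isStarNormal_of_mem_unitary hw
  intro z hz
  have hz_norm : ‖z‖ = 1 := spectrum.norm_eq_one_of_unitary hw hz
  have hz_re : 0 ≤ z.re :=
    spectrum_nonneg_of_nonneg hre (spectrum_realPart' w ▸ Set.mem_image_of_mem re hz)
  refine mem_slitPlane_iff.mpr (hz_re.lt_or_eq.imp id fun h him => ?_)
  simp [Complex.ext (h.symm.trans zero_re.symm) him] at hz_norm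

lemma exists_unitary_pow_eq_of_nonneg_realPart (hw : w ∈ unitary A) (hre : 0 ≤ (ℜ w : A))
    {n : ℕ} (hn : n ≠ 0) :
    ∃ r ∈ unitary A, r ^ n = w ∧
      ∀ b, Commute w b → Commute (star w) b → Commute r b := by
  have := isStarNormal_of_mem_unitary hw
  have hcont : ContinuousOn (fun z : ℂ => z ^ (n⁻¹ : ℂ)) (spectrum ℂ w) := fun z hz =>
    (continuousAt_cpow_const
      (spectrum_subset_slitPlane_of_nonneg_realPart hw hre hz)).continuousWithinAt
  refine ⟨cfc (fun z : ℂ => z ^ (n⁻¹ : ℂ)) w, ?_, ?_, fun b hb hb' => hb.cfc hb' _⟩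
  · rw [cfc_unitary_iff _ w]
    intro z hz
    have hz_norm : ‖z‖ = 1 := spectrum.norm_eq_one_of_unitary hw hz
    have : ‖z ^ (n⁻¹ : ℂ)‖ = 1 := by
      rw [← ofReal_natCast, ← ofReal_inv, norm_cpow_real, hz_norm, Real.one_rpow]
    rw [star_def, conj_mul', this]; norm_num
  · rw [← cfc_pow _ n w]
    conv_rhs => rw [← cfc_id' ℂ w]
    exact cfc_congr fun z _ => cpow_nat_inv_pow z hn

lemma exists_unitary_pow_mul_eq_of_nonneg_realPart_mul {p : A} (hw : w ∈ unitary A)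
    (hp : IsStarProjection p) (hpw : Commute p w) (hre : 0 ≤ (ℜ w : A) * p) {n : ℕ}
    (hn : n ≠ 0) :
    ∃ r ∈ unitary A, Commute p r ∧ r ^ n * p = w * p := by
  have hq : Commute p (1 : A) := .one_right p
  have hpw' : Commute p (star w) := hp.isSelfAdjoint.star_eq ▸ hpw.star_star
  -- `1 * (1 - p)` rather than `1 - p`, to match the gluing lemmas
  set w' := w * p + 1 * (1 - p) with hw'
  have hw'u : w' ∈ unitary A :=
    mul_add_mul_one_sub_mem_unitary hp hpw hq hw (Submonoid.one_mem _)
  have hw'star : star w' = star w * p + 1 * (1 - p) := by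
    rw [star_mul_add_mul_one_sub hp.isSelfAdjoint hpw hq, star_one]
  have hre' : (ℜ w' : A) = ℜ w * p + (1 - p) := by
    rw [realPart_apply_coe, realPart_apply_coe, hw'star, hw', smul_mul_assoc, add_mul, one_mul]
    module
  obtain ⟨r, hr, hrn, hcomm⟩ :=
    exists_unitary_pow_eq_of_nonneg_realPart hw'u (hre' ▸ add_nonneg hre hp.one_sub.nonneg) hn
  refine ⟨r, hr, (hcomm p ?_ ?_).symm, ?_⟩
  · exact (commute_mul_add_mul_one_sub hpw hq).symm
  · exact hw'star ▸ (commute_mul_add_mul_one_sub hpw' hq).symm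
  · rw [hrn, add_mul, mul_assoc, hp.isIdempotentElem.eq, one_mul, sub_mul, one_mul,
      hp.isIdempotentElem.eq, sub_self, add_zero]

end Roots

section Hilbert

namespace Submodule

variable {𝕜 E : Type*} [RCLike 𝕜] [NormedAddCommGroup E] [InnerProductSpace 𝕜 E]
  {K : Submodule 𝕜 E} [K.HasOrthogonalProjection] {b : E →L[𝕜] E}

lemma starProjection_mul_mul_starProjection (hb : ∀ x ∈ K, b x ∈ K) :
    K.starProjection * b * K.starProjection = b * K.starProjection := by
  ext x
  exact starProjection_eq_self_iff.mpr (hb _ (starProjection_apply_mem K x))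

lemma commute_starProjection [CompleteSpace E] (hb : ∀ x ∈ K, b x ∈ K)
    (hb' : ∀ x ∈ K, star b x ∈ K) : Commute K.starProjection b := by
  have hp : star K.starProjection = K.starProjection :=
    isStarProjection_starProjection.isSelfAdjoint
  have h := congrArg star (starProjection_mul_mul_starProjection hb')
  simp only [star_mul, star_star, hp, ← mul_assoc] at h
  exact h.symm.trans (starProjection_mul_mul_starProjection hb)

end Submodule

variable {H : Type*} [NormedAddCommGroup H] [InnerProductSpace ℂ H] [CompleteSpace H]

lemma IsSelfAdjoint.exists_isStarProjection_mul_eq_posPart {a : H →L[ℂ] H}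
    (ha : IsSelfAdjoint a) :
    ∃ p, IsStarProjection p ∧ (∀ b, Commute a b → Commute p b) ∧
      a * p = a⁺ ∧ a * (1 - p) = -a⁻ := by
  set K := ((a⁻ : H →L[ℂ] H) : H →ₗ[ℂ] H).ker
  have hp : IsStarProjection K.starProjection := isStarProjection_starProjection
  have hneg : a⁻ * K.starProjection = 0 := by
    ext x
    exact K.starProjection_apply_mem x
  have hpos : K.starProjection * a⁺ = a⁺ := by
    ext x
    refine Submodule.starProjection_eq_self_iff.mpr ?_
    change (a⁻ * a⁺) x = 0
    rw [CFC.negPart_mul_posPart, zero_apply]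
  have hpos' : a⁺ * K.starProjection = a⁺ := by
    simpa [hp.isSelfAdjoint.star_eq, (CFC.posPart_nonneg a).isSelfAdjoint.star_eq]
      using congrArg star hpos
  have hmul : a * K.starProjection = a⁺ := by
    calc a * K.starProjection = (a⁺ - a⁻) * K.starProjection := by
          rw [CFC.posPart_sub_negPart a]
      _ = a⁺ := by rw [sub_mul, hpos', hneg, sub_zero]
  have hinv : ∀ b : H →L[ℂ] H, Commute a b → ∀ x ∈ K, b x ∈ K := by
    intro b hb x hx
    have hc : Commute a⁻ b := hb.cfcₙ_real _
    change (a⁻ * b) x = 0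
    rw [hc.eq]
    exact (congrArg b hx).trans (map_zero b)
  refine ⟨K.starProjection, hp, fun b hb => ?_, hmul, ?_⟩
  · exact Submodule.commute_starProjection (hinv b hb) (hinv _ (ha.star_eq ▸ hb.star_star))
  · calc a * (1 - K.starProjection) = (a⁺ - a⁻) - a⁺ := by
          rw [mul_sub, mul_one, hmul, CFC.posPart_sub_negPart a]
      _ = -a⁻ := by abel

end Hilbert

lemma Complex.exists_mem_unitary_pow_eq_neg_one {n : ℕ} (hn : n ≠ 0) :
    ∃ c ∈ unitary ℂ, c ^ n = -1 := by
  refine ⟨exp ((Real.pi / n : ℝ) * I), ?_, ?_⟩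
  · rw [Unitary.mem_iff, star_def, conj_mul', mul_conj', norm_exp_ofReal_mul_I]
    norm_num
  · rw [← exp_nat_mul, ← mul_assoc]
    push_cast
    rw [mul_div_cancel₀ _ (by exact_mod_cast hn), exp_pi_mul_I]

/-- Every unitary bounded linear operator `u` on a complex Hilbert space `H` has, for each
natural number `n ≥ 1`, a unitary n-th root: a unitary bounded linear operator `v` on `H`
with `v ^ n = u`. -/
theorem stmt_7 (H : Type*) [NormedAddCommGroup H] [InnerProductSpace ℂ H] [CompleteSpace H]
    (u : H →L[ℂ] H) (hu : u ∈ unitary (H →L[ℂ] H)) (n : ℕ) (hn : 1 ≤ n) :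
    ∃ v : H →L[ℂ] H, v ∈ unitary (H →L[ℂ] H) ∧ v ^ n = u := by
  have hn0 : n ≠ 0 := by omega
  have hu_re : Commute (ℜ u : H →L[ℂ] H) u := by
    rw [realPart_apply_coe]
    exact ((Commute.refl u).add_left (isStarNormal_of_mem_unitary hu).star_comm_self).smul_left _
  obtain ⟨p, hp, hcomm, hpos, hneg⟩ := (ℜ u).2.exists_isStarProjection_mul_eq_posPart
  have hpu : Commute p u := hcomm u hu_re
  obtain ⟨r₁, hr₁, hpr₁, hr₁n⟩ :=
    exists_unitary_pow_mul_eq_of_nonneg_realPart_mul hu hp hpu (hpos ▸ CFC.posPart_nonneg _) hn0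
  have hu_neg : -u ∈ unitary (H →L[ℂ] H) := (-(⟨u, hu⟩ : unitary (H →L[ℂ] H))).2
  have hre_neg : 0 ≤ (ℜ (-u) : H →L[ℂ] H) * (1 - p) := by
    rw [map_neg, AddSubgroup.coe_neg, neg_mul, hneg, neg_neg]
    exact CFC.negPart_nonneg _
  obtain ⟨r₂, hr₂, hpr₂, hr₂n⟩ := exists_unitary_pow_mul_eq_of_nonneg_realPart_mul hu_neg
    hp.one_sub ((Commute.one_left u).sub_left hpu).neg_right hre_neg hn0
  obtain ⟨c, hc, hcn⟩ := Complex.exists_mem_unitary_pow_eq_neg_one hn0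
  have hpcr₂ : Commute p (c • r₂) := by
    simpa using ((Commute.one_left r₂).sub_left hpr₂).smul_right c
  refine ⟨r₁ * p + (c • r₂) * (1 - p), mul_add_mul_one_sub_mem_unitary hp hpr₁ hpcr₂ hr₁
    (Unitary.smul_mem ⟨c, hc⟩ hr₂), ?_⟩
  rw [mul_add_mul_one_sub_pow hp.isIdempotentElem hpr₁ hpcr₂, hr₁n, smul_pow, hcn,
    smul_mul_assoc, hr₂n, neg_one_smul, neg_mul, neg_neg, ← mul_add, add_sub_cancel, mul_one]
end

section
/- There exist a nonzero complex Hilbert space H and unitary bounded linear operators u, v, u₁ on H such that: u and v commute (uv = vu), the spectrum of u and the spectrum of v both equal the full unit circle {z ∈ ℂ : |z| = 1}, u₁² = u, and u₁v = −vu₁. -/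
/-- A witness for Statement 11: a nonzero complex Hilbert space `H` together with unitary
bounded linear operators `u`, `v`, `u₁` on `H` such that `u` and `v` commute, the spectra of
`u` and `v` both equal the full unit circle, `u₁ ^ 2 = u`, and `u₁` anticommutes with `v`. -/
structure Stmt11Witness where
  H : Type
  [iN : NormedAddCommGroup H]
  [iP : InnerProductSpace ℂ H]
  [iC : CompleteSpace H]
  [iT : Nontrivial H]
  u : H →L[ℂ] H
  v : H →L[ℂ] H
  u₁ : H →L[ℂ] H
  hu : u ∈ unitary (H →L[ℂ] H)
  hv : v ∈ unitary (H →L[ℂ] H)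
  hu₁ : u₁ ∈ unitary (H →L[ℂ] H)
  hcomm : u * v = v * u
  hspec_u : spectrum ℂ u = Metric.sphere (0 : ℂ) 1
  hspec_v : spectrum ℂ v = Metric.sphere (0 : ℂ) 1
  hsq : u₁ ^ 2 = u
  hanti : u₁ * v = -(v * u₁)

/-! On `ℓ²(S¹ × {0, 1})` let `u` and `v` be diagonal, with eigenvalues `z²` and `±z` at the basis
vector of `(z, b)`, the sign depending on the sheet `b`; their point spectra already fill the
circle. The square root `u₁` multiplies by `z` and swaps the two sheets: swapping twice is the
identity, so `u₁² = u`, while the swap flips the sign of the eigenvalue of `v`, so `u₁` and `v`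
anticommute. -/

open Module.End

variable {I : Type*}

local notation "ℓ²(" I ")" => lp (fun _ : I => ℂ) 2

lemma memℓp_weightedComp (σ : Equiv.Perm I) (c : I → Circle) (f : ℓ²(I)) :
    Memℓp (fun i => (c i : ℂ) * f (σ i)) 2 := by
  have hf : Summable fun i => ‖f i‖ ^ (2 : ℝ) := by
    simpa using (memℓp_gen_iff (by norm_num : 0 < (2 : ENNReal).toReal)).1 (lp.memℓp f)
  refine memℓp_gen ?_
  simpa [Circle.norm_coe, Function.comp_def] using (Equiv.summable_iff σ).2 hf

noncomputable def weightedComp (σ : Equiv.Perm I) (c : I → Circle) : ℓ²(I) ≃ₗᵢ[ℂ] ℓ²(I) where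
  toFun f := ⟨_, memℓp_weightedComp σ c f⟩
  invFun f := ⟨_, memℓp_weightedComp σ.symm (fun i => (c (σ.symm i))⁻¹) f⟩
  map_add' f g := by ext i; exact mul_add _ _ _
  map_smul' a f := by ext i; simp [mul_left_comm]
  left_inv f := by ext i; simp
  right_inv f := by ext i; simp
  norm_map' f := by
    have h2 : 0 < (2 : ENNReal).toReal := by norm_num
    rw [lp.norm_eq_tsum_rpow h2, lp.norm_eq_tsum_rpow h2,
      ← Equiv.tsum_eq σ fun i => ‖f i‖ ^ (2 : ENNReal).toReal]
    congr 2 with i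
    change ‖(c i : ℂ) * f (σ i)‖ ^ _ = _
    rw [norm_mul, Circle.norm_coe, one_mul]

@[simp]
lemma weightedComp_apply (σ : Equiv.Perm I) (c : I → Circle) (f : ℓ²(I)) (i : I) :
    weightedComp σ c f i = c i * f (σ i) := rfl

lemma weightedComp_mem_unitary (σ : Equiv.Perm I) (c : I → Circle) :
    (weightedComp σ c : ℓ²(I) →L[ℂ] ℓ²(I)) ∈ unitary (ℓ²(I) →L[ℂ] ℓ²(I)) :=
  (Unitary.linearIsometryEquiv.symm (weightedComp σ c)).property

lemma weightedComp_mul_weightedComp (σ τ : Equiv.Perm I) (c d : I → Circle) :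
    (weightedComp σ c : ℓ²(I) →L[ℂ] ℓ²(I)) * weightedComp τ d
      = weightedComp (σ.trans τ) (c * d ∘ σ) := by
  ext f i
  simp [mul_assoc]

lemma neg_weightedComp (σ : Equiv.Perm I) (c : I → Circle) :
    -(weightedComp σ c : ℓ²(I) →L[ℂ] ℓ²(I)) = weightedComp σ (-c) := by
  ext f i
  simp

lemma lp_single_one_ne_zero [DecidableEq I] (j : I) : (lp.single 2 j 1 : ℓ²(I)) ≠ 0 := by
  simp [← norm_pos_iff, lp.norm_single]

instance [Nonempty I] : Nontrivial ℓ²(I) := by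
  classical
  exact nontrivial_of_ne _ _ (lp_single_one_ne_zero (Classical.arbitrary I))

lemma weightedComp_refl_single [DecidableEq I] (c : I → Circle) (j : I) :
    (weightedComp (Equiv.refl I) c : ℓ²(I) →L[ℂ] ℓ²(I)) (lp.single 2 j 1)
      = (c j : ℂ) • lp.single 2 j 1 := by
  ext i
  rcases eq_or_ne i j with rfl | hij
  · simp
  · simp [Pi.single_eq_of_ne hij]

lemma spectrum_weightedComp_refl (c : I → Circle) (hc : Function.Surjective c) :
    spectrum ℂ (weightedComp (Equiv.refl I) c : ℓ²(I) →L[ℂ] ℓ²(I)) = Metric.sphere 0 1 := by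
  classical
  refine (spectrum.subset_circle_of_unitary (weightedComp_mem_unitary _ c)).antisymm fun w hw => ?_
  obtain ⟨j, hj⟩ := hc ⟨w, hw⟩
  change ((⟨w, hw⟩ : Circle) : ℂ) ∈ _
  rw [ContinuousLinearMap.spectrum_eq, ← hj]
  exact HasEigenvalue.mem_spectrum <| hasEigenvalue_of_hasEigenvector
    ⟨mem_eigenspace_iff.2 (weightedComp_refl_single c j), lp_single_one_ne_zero j⟩

lemma Circle.exists_sq_eq (z : Circle) : ∃ w : Circle, w ^ 2 = z := by
  obtain ⟨t, rfl⟩ := Circle.exp_surjective z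
  exact ⟨Circle.exp (t / 2), by rw [← Circle.exp_nsmul, nsmul_eq_mul]; ring_nf⟩

def sheetSwap : Equiv.Perm (Circle × Bool) := Equiv.prodCongr (Equiv.refl _) Equiv.boolNot

noncomputable def signedFst (i : Circle × Bool) : Circle := if i.2 then -i.1 else i.1

lemma sheetSwap_trans_self : sheetSwap.trans sheetSwap = Equiv.refl _ := by
  ext ⟨z, b⟩ <;> simp [sheetSwap]

lemma fst_comp_sheetSwap : Prod.fst ∘ sheetSwap = Prod.fst := rfl

lemma signedFst_sheetSwap (i : Circle × Bool) : signedFst (sheetSwap i) = -signedFst i := by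
  obtain ⟨z, _ | _⟩ := i <;> simp [signedFst, sheetSwap]

/-- There exist a nonzero complex Hilbert space `H` and unitary operators `u, v, u₁` on `H`
such that `u` and `v` commute, both have full unit-circle spectrum, `u₁² = u`, and
`u₁ v = - v u₁`. -/
theorem stmt_11 : Nonempty Stmt11Witness := by
  have hsurj_sq : Function.Surjective (Prod.fst ^ 2 : Circle × Bool → Circle) := fun z =>
    let ⟨w, hw⟩ := z.exists_sq_eq; ⟨(w, false), hw⟩
  have hsurj_signed : Function.Surjective signedFst := fun z => ⟨(z, false), rfl⟩
  refine ⟨{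
    H := ℓ²(Circle × Bool)
    u := weightedComp (Equiv.refl _) (Prod.fst ^ 2 : Circle × Bool → Circle)
    v := weightedComp (Equiv.refl _) signedFst
    u₁ := weightedComp sheetSwap Prod.fst
    hu := weightedComp_mem_unitary _ _
    hv := weightedComp_mem_unitary _ _
    hu₁ := weightedComp_mem_unitary _ _
    hcomm := by rw [weightedComp_mul_weightedComp, weightedComp_mul_weightedComp, mul_comm]; rfl
    hspec_u := spectrum_weightedComp_refl _ hsurj_sq
    hspec_v := spectrum_weightedComp_refl _ hsurj_signed
    hsq := ?_
    hanti := ?_ }⟩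
  · rw [sq, weightedComp_mul_weightedComp, sheetSwap_trans_self, fst_comp_sheetSwap, ← sq]
  · have hc : Prod.fst * signedFst ∘ sheetSwap = -(signedFst * Prod.fst) := by
      ext1 i
      simp [signedFst_sheetSwap, mul_comm]
    rw [weightedComp_mul_weightedComp, weightedComp_mul_weightedComp, neg_weightedComp,
      Equiv.trans_refl, Equiv.refl_trans, hc]
    rfl
end
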